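/- Telescoping determinant product: let (Φ_t)_{t=s}^{T} be positive definite d×d matrices with Φ_{t} = Φ_{t-1} + y_t y_tᵀ - x_t x_tᵀ for t = s+1,…,T. Then det(Φ_T)/det(Φ_s) = Π_{t=s+1}^{T} [(1 + ‖y_t‖²_{Φ_{t-1}⁻¹})(1 - ‖x_t‖²_{Φ_{t-1}⁻¹}) + ⟨y_t, x_t⟩²_{Φ_{t-1}⁻¹}]. -/

import Mathlib

open Matrix

lemma step_det {d : ℕ} {A : Matrix (Fin d) (Fin d) ℝ} (hA : A.PosDef) (x y : Fin d → ℝ) :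
    (A + Matrix.vecMulVec y y - Matrix.vecMulVec x x).det
      = A.det * ((1 + y ⬝ᵥ (A⁻¹ *ᵥ y)) * (1 - x ⬝ᵥ (A⁻¹ *ᵥ x)) + (y ⬝ᵥ (A⁻¹ *ᵥ x)) ^ 2) := by
  have hdet : IsUnit A.det := (hA.det_pos.ne').isUnit
  have hAT : Aᵀ = A := by
    have := hA.isHermitian.eq
    simpa using this
  have hAinv : (A⁻¹)ᵀ = A⁻¹ := by rw [Matrix.transpose_nonsing_inv, hAT]
  set U : Matrix (Fin d) (Fin 2) ℝ :=
    Matrix.of (fun i j => if j = 0 then (A⁻¹ *ᵥ y) i else (A⁻¹ *ᵥ x) i) with hU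
  set V : Matrix (Fin 2) (Fin d) ℝ :=
    Matrix.of (fun j i => if j = 0 then y i else -(x i)) with hV
  have hUV : U * V = A⁻¹ * (Matrix.vecMulVec y y - Matrix.vecMulVec x x) := by
    ext i k
    simp [hU, hV, Matrix.mul_apply, Fin.sum_univ_two, Matrix.vecMulVec_apply, Matrix.mulVec,
      dotProduct, Finset.mul_sum, Finset.sum_sub_distrib, mul_sub, mul_comm, mul_assoc,
      mul_left_comm]
    rw [← Finset.sum_neg_distrib, ← Finset.sum_add_distrib]
    exact Finset.sum_congr rfl fun j _ => by ring
  have hmain : A + Matrix.vecMulVec y y - Matrix.vecMulVec x x = A * (1 + U * V) := by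
    rw [hUV, Matrix.mul_add, Matrix.mul_one, ← Matrix.mul_assoc,
      Matrix.mul_nonsing_inv A hdet, Matrix.one_mul, add_sub_assoc]
  have hvm : x ᵥ* A⁻¹ = A⁻¹ *ᵥ x := by nth_rewrite 1 [← hAinv]; rw [Matrix.vecMul_transpose]
  have hsymm : x ⬝ᵥ (A⁻¹ *ᵥ y) = y ⬝ᵥ (A⁻¹ *ᵥ x) := by
    rw [Matrix.dotProduct_mulVec, hvm, dotProduct_comm]
  have hsymm' : ∑ i, x i * (A⁻¹ *ᵥ y) i = ∑ i, y i * (A⁻¹ *ᵥ x) i := hsymm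
  rw [hmain, Matrix.det_mul, Matrix.det_one_add_mul_comm]
  congr 1
  rw [Matrix.det_fin_two]
  simp only [Matrix.add_apply, Matrix.mul_apply, Fin.sum_univ_two]
  simp [hU, hV, Matrix.one_apply, dotProduct]
  rw [hsymm']
  ring

theorem stmt17 (d s T : ℕ) (hsT : s ≤ T)
    (Φ : ℕ → Matrix (Fin d) (Fin d) ℝ) (x y : ℕ → Fin d → ℝ)
    (hpd : ∀ t, s ≤ t → t ≤ T → (Φ t).PosDef)
    (hrec : ∀ t, s + 1 ≤ t → t ≤ T →
      Φ t = Φ (t - 1) + Matrix.vecMulVec (y t) (y t) - Matrix.vecMulVec (x t) (x t)) :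
    (Φ T).det / (Φ s).det
      = ∏ t ∈ Finset.Icc (s + 1) T,
          ((1 + y t ⬝ᵥ ((Φ (t - 1))⁻¹ *ᵥ y t)) * (1 - x t ⬝ᵥ ((Φ (t - 1))⁻¹ *ᵥ x t))
            + (y t ⬝ᵥ ((Φ (t - 1))⁻¹ *ᵥ x t)) ^ 2) := by
  have hs0 : (Φ s).det ≠ 0 := (hpd s le_rfl hsT).det_pos.ne'
  have key : ∀ n, s ≤ n → n ≤ T →
      (Φ n).det / (Φ s).det
        = ∏ t ∈ Finset.Icc (s + 1) n,
            ((1 + y t ⬝ᵥ ((Φ (t - 1))⁻¹ *ᵥ y t)) * (1 - x t ⬝ᵥ ((Φ (t - 1))⁻¹ *ᵥ x t))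
              + (y t ⬝ᵥ ((Φ (t - 1))⁻¹ *ᵥ x t)) ^ 2) := by
    intro n hn
    induction n, hn using Nat.le_induction with
    | base =>
      intro _
      rw [Finset.Icc_eq_empty (by omega), Finset.prod_empty, div_self hs0]
    | succ n hn ih =>
      intro hnT
      rw [Finset.prod_Icc_succ_top (by omega), ← ih (by omega)]
      have hrec' := hrec (n + 1) (by omega) hnT
      simp only [Nat.add_sub_cancel] at hrec' ⊢
      have := step_det (A := Φ n) (hpd n hn (by omega)) (x (n + 1)) (y (n + 1))
      rw [hrec', this, mul_div_right_comm]
  exact key T hsT le_rfl
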